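/- arXiv:math-ph/0412090 — 5 statements merged into one kernel-verified Lean document; each statement's English description precedes it below -/
import Mathlib

section
/- Let f(x) = Σ_{d∈D} a_d·∏ᵢ xᵢ^{dᵢ} be a generalized polynomial with positive coefficients a_d > 0 and finite D ⊂ ℝⁿ. Then for every x ∈ ℝⁿ, lim_{h→0⁺} h·log f(exp(x/h)) = max_{d∈D} ⟨d, x⟩. -/
open Filter Topology

/-- Dequantization of a generalized polynomial with positive coefficients equals
`max_{d ∈ D} ⟨d, x⟩` everywhere. -/
theorem dequantization_generalized_polynomial_pos {n : ℕ}
    (D : Finset (Fin n → ℝ)) (hD : D.Nonempty) (a : (Fin n → ℝ) → ℝ)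
    (ha : ∀ d ∈ D, 0 < a d) (x : Fin n → ℝ) :
    Filter.Tendsto
      (fun h : ℝ => h * Real.log
        (∑ d ∈ D, a d * ∏ i, (Real.exp (x i / h) ^ (d i) : ℝ)))
      (nhdsWithin 0 (Set.Ioi 0))
      (nhds (D.sup' hD (fun d => ∑ i, d i * x i))) := by
  set M := D.sup' hD (fun d => ∑ i, d i * x i) with hM
  obtain ⟨d0, hd0, hd0M⟩ := D.exists_mem_eq_sup' hD (fun d => ∑ i, d i * x i)
  have hA : 0 < ∑ d ∈ D, a d := Finset.sum_pos ha hD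
  have key : ∀ h : ℝ, 0 < h →
      (∑ d ∈ D, a d * ∏ i, (Real.exp (x i / h) ^ (d i) : ℝ))
      = ∑ d ∈ D, a d * Real.exp ((∑ i, d i * x i) / h) := by
    intro h hh
    refine Finset.sum_congr rfl fun d hd => ?_
    congr 1
    calc ∏ i, Real.exp (x i / h) ^ (d i)
        = ∏ i, Real.exp (d i * x i / h) := by
          refine Finset.prod_congr rfl fun i _ => ?_
          rw [Real.rpow_def_of_pos (Real.exp_pos _), Real.log_exp]
          ring_nf
      _ = Real.exp (∑ i, d i * x i / h) := (Real.exp_sum _ _).symm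
      _ = Real.exp ((∑ i, d i * x i) / h) := by rw [Finset.sum_div]
  have hSpos : ∀ h : ℝ, 0 < h →
      0 < ∑ d ∈ D, a d * Real.exp ((∑ i, d i * x i) / h) := by
    intro h hh
    exact Finset.sum_pos (fun d hd => mul_pos (ha d hd) (Real.exp_pos _)) hD
  have lower : ∀ h : ℝ, h ∈ Set.Ioi (0:ℝ) →
      h * Real.log (a d0) + M ≤
        h * Real.log (∑ d ∈ D, a d * ∏ i, (Real.exp (x i / h) ^ (d i) : ℝ)) := by
    intro h hh
    rw [Set.mem_Ioi] at hh
    rw [key h hh]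
    have hle : a d0 * Real.exp (M / h) ≤
        ∑ d ∈ D, a d * Real.exp ((∑ i, d i * x i) / h) := by
      have := Finset.single_le_sum
        (f := fun d => a d * Real.exp ((∑ i, d i * x i) / h))
        (fun d hd => le_of_lt (mul_pos (ha d hd) (Real.exp_pos _))) hd0
      rw [hM, hd0M]; exact this
    have hlog := Real.log_le_log (mul_pos (ha d0 hd0) (Real.exp_pos _)) hle
    have := mul_le_mul_of_nonneg_left hlog (le_of_lt hh)
    calc h * Real.log (a d0) + M
        = h * Real.log (a d0 * Real.exp (M / h)) := by
          rw [Real.log_mul (ne_of_gt (ha d0 hd0)) (Real.exp_ne_zero _),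
            Real.log_exp, mul_add, mul_div_cancel₀ _ (ne_of_gt hh)]
      _ ≤ _ := this
  have upper : ∀ h : ℝ, h ∈ Set.Ioi (0:ℝ) →
      h * Real.log (∑ d ∈ D, a d * ∏ i, (Real.exp (x i / h) ^ (d i) : ℝ)) ≤
        h * Real.log (∑ d ∈ D, a d) + M := by
    intro h hh
    rw [Set.mem_Ioi] at hh
    rw [key h hh]
    have hle : ∑ d ∈ D, a d * Real.exp ((∑ i, d i * x i) / h) ≤
        (∑ d ∈ D, a d) * Real.exp (M / h) := by
      rw [Finset.sum_mul]
      refine Finset.sum_le_sum fun d hd => ?_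
      refine mul_le_mul_of_nonneg_left ?_ (le_of_lt (ha d hd))
      refine Real.exp_le_exp.2 ?_
      gcongr
      exact Finset.le_sup' (fun d => ∑ i, d i * x i) hd
    have hlog := Real.log_le_log (hSpos h hh) hle
    have := mul_le_mul_of_nonneg_left hlog (le_of_lt hh)
    calc h * Real.log (∑ d ∈ D, a d * Real.exp ((∑ i, d i * x i) / h))
        ≤ h * Real.log ((∑ d ∈ D, a d) * Real.exp (M / h)) := this
      _ = h * Real.log (∑ d ∈ D, a d) + M := by
          rw [Real.log_mul (ne_of_gt hA) (Real.exp_ne_zero _),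
            Real.log_exp, mul_add, mul_div_cancel₀ _ (ne_of_gt hh)]
  have aux : ∀ c : ℝ, Filter.Tendsto (fun h : ℝ => h * c + M)
      (nhdsWithin 0 (Set.Ioi 0)) (nhds M) := by
    intro c
    have h1 : Continuous (fun h : ℝ => h * c + M) :=
      (continuous_id.mul continuous_const).add continuous_const
    have := (h1.tendsto 0).mono_left (nhdsWithin_le_nhds (s := Set.Ioi (0:ℝ)))
    simpa using this
  refine tendsto_of_tendsto_of_tendsto_of_le_of_le'
    (aux (Real.log (a d0))) (aux (Real.log (∑ d ∈ D, a d))) ?_ ?_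
  · filter_upwards [self_mem_nhdsWithin] with h hh using lower h hh
  · filter_upwards [self_mem_nhdsWithin] with h hh using upper h hh
end

section
/- If p₁, p₂ : ℝⁿ → ℝ are sublinear functions, then ∂(p₁ + p₂) = ∂p₁ + ∂p₂ (Minkowski sum), where ∂p = { v : ⟨v, x⟩ ≤ p(x) for all x }. -/
open Pointwise
/-- The subdifferential at the origin of a sum of sublinear functions is the
Minkowski sum of the subdifferentials. -/
theorem subdifferential_add {n : ℕ} (p₁ p₂ : (Fin n → ℝ) → ℝ)
    (hcont₁ : Continuous p₁) (hcont₂ : Continuous p₂)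
    (hsub₁ : ∀ x y : Fin n → ℝ, p₁ (x + y) ≤ p₁ x + p₁ y)
    (hsub₂ : ∀ x y : Fin n → ℝ, p₂ (x + y) ≤ p₂ x + p₂ y)
    (hhom₁ : ∀ (c : ℝ), 0 ≤ c → ∀ x : Fin n → ℝ, p₁ (c • x) = c * p₁ x)
    (hhom₂ : ∀ (c : ℝ), 0 ≤ c → ∀ x : Fin n → ℝ, p₂ (c • x) = c * p₂ x) :
    {v : Fin n → ℝ | ∀ x, ∑ i, v i * x i ≤ p₁ x + p₂ x} =
      {v : Fin n → ℝ | ∀ x, ∑ i, v i * x i ≤ p₁ x} +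
        {v : Fin n → ℝ | ∀ x, ∑ i, v i * x i ≤ p₂ x} := by
  have hp₁0 : p₁ 0 = 0 := by
    have := hhom₁ 0 le_rfl 0; simpa using this
  have hp₂0 : p₂ 0 = 0 := by
    have := hhom₂ 0 le_rfl 0; simpa using this
  ext v
  constructor
  · -- hard direction
    intro hv
    simp only [Set.mem_setOf_eq] at hv
    -- the linear functional F w = ∑ v i * w i
    set F : (Fin n → ℝ) → ℝ := fun w => ∑ i, v i * w i with hF
    have hFadd : ∀ x y, F (x + y) = F x + F y := by
      intro x y
      simp [hF, mul_add, Finset.sum_add_distrib]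
    have hFsmul : ∀ (c : ℝ) x, F (c • x) = c * F x := by
      intro c x
      simp only [hF, Pi.smul_apply, smul_eq_mul, Finset.mul_sum]
      exact Finset.sum_congr rfl fun i _ => by ring
    -- inf-convolution N x = inf_w (p₁ (x + w) + p₂ w - F w)
    set N : (Fin n → ℝ) → ℝ :=
      fun x => sInf (Set.range fun w => p₁ (x + w) + p₂ w - F w) with hN
    have hlb : ∀ x w, F x - p₂ x ≤ p₁ (x + w) + p₂ w - F w := by
      intro x w
      have h1 : F (x + w) ≤ p₁ (x + w) + p₂ (x + w) := hv (x + w)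
      have h2 : p₂ (x + w) ≤ p₂ x + p₂ w := hsub₂ x w
      have h3 : F (x + w) = F x + F w := hFadd x w
      linarith
    have hbdd : ∀ x, BddBelow (Set.range fun w => p₁ (x + w) + p₂ w - F w) := by
      intro x
      exact ⟨F x - p₂ x, by rintro a ⟨w, rfl⟩; exact hlb x w⟩
    have hne : ∀ x, (Set.range fun w => p₁ (x + w) + p₂ w - F w).Nonempty :=
      fun x => Set.range_nonempty _
    have hNle : ∀ x w, N x ≤ p₁ (x + w) + p₂ w - F w := by
      intro x w
      exact csInf_le (hbdd x) ⟨w, rfl⟩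
    have hNlb : ∀ x, F x - p₂ x ≤ N x := by
      intro x
      exact le_csInf (hne x) (by rintro a ⟨w, rfl⟩; exact hlb x w)
    -- N is sublinear
    have N_add : ∀ x y, N (x + y) ≤ N x + N y := by
      intro x y
      have key : ∀ w w', N (x + y) ≤ (p₁ (x + w) + p₂ w - F w) +
          (p₁ (y + w') + p₂ w' - F w') := by
        intro w w'
        have h1 := hNle (x + y) (w + w')
        have h2 : p₁ (x + y + (w + w')) ≤ p₁ (x + w) + p₁ (y + w') := by
          have := hsub₁ (x + w) (y + w')
          have he : x + y + (w + w') = (x + w) + (y + w') := by abel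
          rw [he]; exact this
        have h3 : p₂ (w + w') ≤ p₂ w + p₂ w' := hsub₂ w w'
        have h4 : F (w + w') = F w + F w' := hFadd w w'
        linarith
      have step1 : ∀ w, N (x + y) - (p₁ (x + w) + p₂ w - F w) ≤ N y := by
        intro w
        refine le_csInf (hne y) ?_
        rintro a ⟨w', rfl⟩
        dsimp only
        have := key w w'
        linarith
      have step2 : N (x + y) - N y ≤ N x := by
        refine le_csInf (hne x) ?_
        rintro a ⟨w, rfl⟩
        dsimp only
        have := step1 w
        linarith
      linarith
    have N_hom : ∀ c : ℝ, 0 < c → ∀ x, N (c • x) = c * N x := by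
      intro c hc x
      have hterm : ∀ w : Fin n → ℝ,
          p₁ (c • x + w) + p₂ w - F w =
            c * (p₁ (x + c⁻¹ • w) + p₂ (c⁻¹ • w) - F (c⁻¹ • w)) := by
        intro w
        have h1 : c • x + w = c • (x + c⁻¹ • w) := by
          rw [smul_add, smul_smul, mul_inv_cancel₀ hc.ne', one_smul]
        rw [h1, hhom₁ c hc.le, ]
        have h2 : p₂ w = c * p₂ (c⁻¹ • w) := by
          rw [hhom₂ c⁻¹ (by positivity) w, ← mul_assoc, mul_inv_cancel₀ hc.ne', one_mul]
        have h3 : F w = c * F (c⁻¹ • w) := by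
          rw [hFsmul c⁻¹ w, ← mul_assoc, mul_inv_cancel₀ hc.ne', one_mul]
        rw [h2, h3]; ring
      apply le_antisymm
      · -- N (c • x) ≤ c * N x
        have h1 : N (c • x) / c ≤ N x := by
          refine le_csInf (hne x) ?_
          rintro a ⟨w, rfl⟩
          dsimp only
          rw [div_le_iff₀' hc]
          have := hNle (c • x) (c • w)
          rw [hterm (c • w)] at this
          have hw : c⁻¹ • c • w = w := by
            rw [smul_smul, inv_mul_cancel₀ hc.ne', one_smul]
          rw [hw] at this
          exact this
        calc N (c • x) = c * (N (c • x) / c) := by field_simp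
          _ ≤ c * N x := mul_le_mul_of_nonneg_left h1 hc.le
      · -- c * N x ≤ N (c • x)
        refine le_csInf (hne (c • x)) ?_
        rintro a ⟨w, rfl⟩
        dsimp only
        rw [hterm w]
        exact mul_le_mul_of_nonneg_left (hNle x (c⁻¹ • w)) hc.le
    -- Hahn-Banach
    have hf : ∀ z : ((⊥ : Submodule ℝ (Fin n → ℝ)) : Type _),
        (0 : ((⊥ : Submodule ℝ (Fin n → ℝ)) →ₗ[ℝ] ℝ)) z ≤ N z := by
      rintro ⟨z, hz⟩
      rw [Submodule.mem_bot] at hz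
      subst hz
      have : F 0 - p₂ 0 ≤ N 0 := hNlb 0
      simp only [hF] at this
      simpa [hp₂0] using this
    obtain ⟨g, -, hgN⟩ :=
      exists_extension_of_le_sublinear ⟨⊥, 0⟩ N N_hom N_add hf
    -- split v
    rw [Set.mem_add]
    refine ⟨fun i => g (fun j => if i = j then 1 else 0), ?_,
            v - fun i => g (fun j => if i = j then 1 else 0), ?_, by abel⟩
    · -- v₁ ∈ ∂p₁
      intro x
      have hgx : g x = ∑ i, x i * g (fun j => if i = j then 1 else 0) := by
        rw [LinearMap.pi_apply_eq_sum_univ g x]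
        simp [smul_eq_mul]
      have h1 : g x ≤ N x := hgN x
      have h2 : N x ≤ p₁ (x + 0) + p₂ 0 - F 0 := hNle x 0
      have h3 : F 0 = 0 := by simp [hF]
      rw [add_zero, hp₂0, h3] at h2
      calc ∑ i, g (fun j => if i = j then 1 else 0) * x i
          = g x := by rw [hgx]; exact Finset.sum_congr rfl fun i _ => mul_comm _ _
        _ ≤ p₁ x := by linarith
    · -- v₂ ∈ ∂p₂
      intro x
      have hgx : g x = ∑ i, x i * g (fun j => if i = j then 1 else 0) := by
        rw [LinearMap.pi_apply_eq_sum_univ g x]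
        simp [smul_eq_mul]
      have hgneg : g (-x) ≤ N (-x) := hgN (-x)
      have h2 : N (-x) ≤ p₁ (-x + x) + p₂ x - F x := hNle (-x) x
      rw [neg_add_cancel, hp₁0, zero_add] at h2
      have hgnx : g (-x) = -g x := by rw [map_neg]
      have hFg : F x - g x ≤ p₂ x := by
        rw [hgnx] at hgneg
        linarith
      calc ∑ i, (v - fun i => g (fun j => if i = j then 1 else 0)) i * x i
          = ∑ i, (v i * x i - g (fun j => if i = j then 1 else 0) * x i) := by
            exact Finset.sum_congr rfl fun i _ => by simp [sub_mul]
        _ = F x - g x := by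
            rw [Finset.sum_sub_distrib, hgx]
            congr 1
            exact Finset.sum_congr rfl fun i _ => mul_comm _ _
        _ ≤ p₂ x := hFg
  · -- easy direction
    rintro ⟨v₁, hv₁, v₂, hv₂, rfl⟩
    intro x
    simp only [Set.mem_setOf_eq] at hv₁ hv₂
    have h1 := hv₁ x
    have h2 := hv₂ x
    have : ∑ i, (v₁ + v₂) i * x i = (∑ i, v₁ i * x i) + ∑ i, v₂ i * x i := by
      rw [← Finset.sum_add_distrib]
      exact Finset.sum_congr rfl fun i _ => by simp [add_mul]
    rw [this]
    linarith
end

section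
/- If p₁, p₂ : ℝⁿ → ℝ are sublinear, then ∂(max(p₁, p₂)) equals the closed convex hull of ∂p₁ ∪ ∂p₂, where max(p₁,p₂)(x) = max(p₁(x), p₂(x)) and ∂p = { v : ⟨v, x⟩ ≤ p(x) for all x }. -/
open Set

section helpers

variable {n : ℕ}

/-- Hahn–Banach: a linear functional dominated by `p` and attaining `p` at `x`. -/
private lemma exists_dominated_attaining {p : (Fin n → ℝ) → ℝ}
    (hsub : ∀ x y, p (x + y) ≤ p x + p y)
    (hhom : ∀ c : ℝ, 0 ≤ c → ∀ x, p (c • x) = c * p x)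
    (x : Fin n → ℝ) :
    ∃ w : Fin n → ℝ, (∀ y, ∑ i, w i * y i ≤ p y) ∧ p x ≤ ∑ i, w i * x i := by
  have hp0 : p 0 = 0 := by
    have h := hhom 0 le_rfl 0
    simpa using h
  have toW : ∀ g : (Fin n → ℝ) →ₗ[ℝ] ℝ, (∀ y, g y ≤ p y) →
      ∃ w : Fin n → ℝ, (∀ y, ∑ i, w i * y i ≤ p y) ∧ (∀ y, g y = ∑ i, w i * y i) := by
    intro g hg
    refine ⟨fun i => g (fun j => if i = j then 1 else 0), fun y => ?_, fun y => ?_⟩ <;>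
      rw [show (∑ i, g (fun j => if i = j then (1:ℝ) else 0) * y i) = g y by
        rw [g.pi_apply_eq_sum_univ y]; simp [mul_comm, smul_eq_mul]]
    · exact hg y
  have key : ∀ z : Fin n → ℝ, z ≠ 0 →
      ∃ w : Fin n → ℝ, (∀ y, ∑ i, w i * y i ≤ p y) ∧ p z ≤ ∑ i, w i * z i := by
    intro z hz
    set f := LinearPMap.mkSpanSingleton (K := ℝ) (L := ℝ) (σ := RingHom.id ℝ) z (p z) hz with hf
    have hdom : ∀ u : f.domain, f u ≤ p u := by
      rintro ⟨u, hu⟩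
      obtain ⟨c, rfl⟩ := Submodule.mem_span_singleton.1 hu
      have happ : f ⟨c • z, hu⟩ = c • p z := LinearPMap.mkSpanSingleton'_apply z (p z) _ c hu
      rw [happ]
      rcases le_or_gt 0 c with hc | hc
      · rw [hhom c hc z]; simp [smul_eq_mul]
      · have h1 : (0:ℝ) ≤ p (c • z) + (-c) * p z := by
          have := hsub (c • z) ((-c) • z)
          rw [hhom (-c) (by linarith) z] at this
          simpa [hp0] using this
        simp only [smul_eq_mul]
        linarith
    obtain ⟨g, hge, hgle⟩ := exists_extension_of_le_sublinear f p
      (fun c hc x => hhom c hc.le x) hsub hdom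
    obtain ⟨w, hw1, hw2⟩ := toW g hgle
    refine ⟨w, hw1, ?_⟩
    have hz' : z ∈ f.domain := Submodule.mem_span_singleton_self z
    have : g z = p z := by
      have := hge ⟨z, hz'⟩
      rwa [LinearPMap.mkSpanSingleton_apply (K := ℝ) (L := ℝ) hz (p z)] at this
    rw [← hw2 z, this]
  rcases eq_or_ne x 0 with rfl | hx
  · rcases subsingleton_or_nontrivial (Fin n → ℝ) with hs | hns
    · refine ⟨0, fun y => ?_, by simp [hp0]⟩
      have : y = 0 := Subsingleton.elim _ _
      simp [this, hp0]
    · obtain ⟨z, hz⟩ := exists_ne (0 : Fin n → ℝ)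
      obtain ⟨w, hw1, _⟩ := key z hz
      exact ⟨w, hw1, by simp [hp0]⟩
  · exact key x hx

private lemma isCompact_sub (p : (Fin n → ℝ) → ℝ) :
    IsCompact {v : Fin n → ℝ | ∀ x, ∑ i, v i * x i ≤ p x} := by
  have hclosed : IsClosed {v : Fin n → ℝ | ∀ x, ∑ i, v i * x i ≤ p x} := by
    have : {v : Fin n → ℝ | ∀ x, ∑ i, v i * x i ≤ p x} =
        ⋂ x, {v : Fin n → ℝ | ∑ i, v i * x i ≤ p x} := by
      ext v; simp [Set.mem_iInter]
    rw [this]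
    exact isClosed_iInter fun x => isClosed_le (by fun_prop) continuous_const
  refine IsCompact.of_isClosed_subset (isCompact_univ_pi
    (fun i => isCompact_Icc (a := -(p (fun j => if i = j then -1 else 0)))
      (b := p (fun j => if i = j then 1 else 0)))) hclosed ?_
  intro v hv
  simp only [Set.mem_univ_pi, Set.mem_Icc]
  intro i
  constructor
  · have h := hv (fun j => if i = j then -1 else 0)
    have : ∑ j, v j * (if i = j then (-1:ℝ) else 0) = -v i := by simp
    rw [this] at h
    linarith
  · have h := hv (fun j => if i = j then 1 else 0)
    have : ∑ j, v j * (if i = j then (1:ℝ) else 0) = v i := by simp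
    rw [this] at h
    linarith

private lemma isCompact_convexJoin {E : Type*} [NormedAddCommGroup E] [NormedSpace ℝ E]
    {s t : Set E} (hs : IsCompact s) (ht : IsCompact t) :
    IsCompact (convexJoin ℝ s t) := by
  have : convexJoin ℝ s t =
      (fun q : ℝ × E × E => (1 - q.1) • q.2.1 + q.1 • q.2.2) ''
        (Set.Icc (0:ℝ) 1 ×ˢ s ×ˢ t) := by
    ext z
    simp only [mem_convexJoin, Set.mem_image, Set.mem_prod, Prod.exists, Set.mem_Icc]
    constructor
    · rintro ⟨a, ha, b, hb, hz⟩
      rw [segment_eq_image ℝ a b] at hz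
      obtain ⟨θ, hθ, rfl⟩ := hz
      exact ⟨θ, a, b, ⟨hθ, ha, hb⟩, rfl⟩
    · rintro ⟨θ, a, b, ⟨hθ, ha, hb⟩, rfl⟩
      refine ⟨a, ha, b, hb, ?_⟩
      rw [segment_eq_image ℝ a b]
      exact ⟨θ, hθ, rfl⟩
  rw [this]
  exact ((isCompact_Icc.prod (hs.prod ht)).image (by fun_prop))

end helpers

/-- The subdifferential at the origin of the max of two sublinear functions is the
convex hull of the union of the subdifferentials. -/
theorem subdifferential_max {n : ℕ} (p₁ p₂ : (Fin n → ℝ) → ℝ)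
    (hcont₁ : Continuous p₁) (hcont₂ : Continuous p₂)
    (hsub₁ : ∀ x y : Fin n → ℝ, p₁ (x + y) ≤ p₁ x + p₁ y)
    (hsub₂ : ∀ x y : Fin n → ℝ, p₂ (x + y) ≤ p₂ x + p₂ y)
    (hhom₁ : ∀ (c : ℝ), 0 ≤ c → ∀ x : Fin n → ℝ, p₁ (c • x) = c * p₁ x)
    (hhom₂ : ∀ (c : ℝ), 0 ≤ c → ∀ x : Fin n → ℝ, p₂ (c • x) = c * p₂ x) :
    {v : Fin n → ℝ | ∀ x, ∑ i, v i * x i ≤ max (p₁ x) (p₂ x)} =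
      convexHull ℝ ({v : Fin n → ℝ | ∀ x, ∑ i, v i * x i ≤ p₁ x} ∪
        {v : Fin n → ℝ | ∀ x, ∑ i, v i * x i ≤ p₂ x}) := by
  set S₁ := {v : Fin n → ℝ | ∀ x, ∑ i, v i * x i ≤ p₁ x} with hS₁
  set S₂ := {v : Fin n → ℝ | ∀ x, ∑ i, v i * x i ≤ p₂ x} with hS₂
  set M := {v : Fin n → ℝ | ∀ x, ∑ i, v i * x i ≤ max (p₁ x) (p₂ x)} with hM
  -- S₁ and S₂ are nonempty, compact, convex
  obtain ⟨w₁0, hw₁0, _⟩ := exists_dominated_attaining hsub₁ hhom₁ 0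
  obtain ⟨w₂0, hw₂0, _⟩ := exists_dominated_attaining hsub₂ hhom₂ 0
  have hconv : ∀ q : (Fin n → ℝ) → ℝ, Convex ℝ {v : Fin n → ℝ | ∀ x, ∑ i, v i * x i ≤ q x} := by
    intro q v hv w hw a b ha hb hab
    intro x
    have h1 := hv x
    have h2 := hw x
    have : ∑ i, (a • v + b • w) i * x i = a * ∑ i, v i * x i + b * ∑ i, w i * x i := by
      simp [Finset.mul_sum, Finset.sum_add_distrib, mul_add, add_mul, mul_assoc]
    rw [this]
    calc a * ∑ i, v i * x i + b * ∑ i, w i * x i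
        ≤ a * q x + b * q x := by
          gcongr
      _ = q x := by rw [← add_mul, hab, one_mul]
  apply Set.Subset.antisymm
  · -- hard direction
    intro v hv
    by_contra hvK
    have hcomp : IsCompact (convexHull ℝ (S₁ ∪ S₂)) := by
      rw [Convex.convexHull_union (hconv p₁) (hconv p₂) ⟨w₁0, hw₁0⟩ ⟨w₂0, hw₂0⟩]
      exact isCompact_convexJoin (isCompact_sub p₁) (isCompact_sub p₂)
    obtain ⟨f, u, hfu, huv⟩ := geometric_hahn_banach_closed_point
      (convex_convexHull ℝ _) hcomp.isClosed hvK
    -- the separating direction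
    set x : Fin n → ℝ := fun i => f (fun j => if i = j then 1 else 0) with hx
    have hfrep : ∀ w : Fin n → ℝ, f w = ∑ i, w i * x i := by
      intro w
      have := (f : (Fin n → ℝ) →ₗ[ℝ] ℝ).pi_apply_eq_sum_univ w
      simpa [smul_eq_mul, hx] using this
    obtain ⟨z₁, hz₁, hz₁'⟩ := exists_dominated_attaining hsub₁ hhom₁ x
    obtain ⟨z₂, hz₂, hz₂'⟩ := exists_dominated_attaining hsub₂ hhom₂ x
    have hz₁mem : z₁ ∈ convexHull ℝ (S₁ ∪ S₂) :=
      subset_convexHull ℝ _ (Or.inl hz₁)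
    have hz₂mem : z₂ ∈ convexHull ℝ (S₁ ∪ S₂) :=
      subset_convexHull ℝ _ (Or.inr hz₂)
    have h1 : p₁ x < u := lt_of_le_of_lt (hz₁'.trans_eq (hfrep z₁).symm) (hfu z₁ hz₁mem)
    have h2 : p₂ x < u := lt_of_le_of_lt (hz₂'.trans_eq (hfrep z₂).symm) (hfu z₂ hz₂mem)
    have hvx : ∑ i, v i * x i ≤ max (p₁ x) (p₂ x) := hv x
    rw [← hfrep v] at hvx
    have : f v < u := lt_of_le_of_lt hvx (max_lt h1 h2)
    linarith
  · -- easy direction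
    apply convexHull_min
    · rintro v (hv | hv) x
      · exact (hv x).trans (le_max_left _ _)
      · exact (hv x).trans (le_max_right _ _)
    · exact hconv (fun x => max (p₁ x) (p₂ x))
end

section
/- The map p ↦ ∂p from sublinear functions on ℝⁿ to nonempty convex compact subsets of ℝⁿ is a semiring homomorphism: it sends max(p₁, p₂) to conv(∂p₁ ∪ ∂p₂) and p₁ + p₂ to the Minkowski sum ∂p₁ + ∂p₂, and it is injective. -/
open Pointwise

private lemma sublin_zero {n : ℕ} (p : (Fin n → ℝ) → ℝ)
    (hhom : ∀ (c : ℝ), 0 ≤ c → ∀ x : Fin n → ℝ, p (c • x) = c * p x) : p 0 = 0 := by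
  have := hhom 0 le_rfl 0
  simpa using this

/-- Existence of a subgradient attaining the value at `x₀`. -/
private lemma exists_subgrad {n : ℕ} (p : (Fin n → ℝ) → ℝ)
    (hsub : ∀ x y : Fin n → ℝ, p (x + y) ≤ p x + p y)
    (hhom : ∀ (c : ℝ), 0 ≤ c → ∀ x : Fin n → ℝ, p (c • x) = c * p x)
    (x₀ : Fin n → ℝ) :
    ∃ v : Fin n → ℝ, (∀ x, ∑ i, v i * x i ≤ p x) ∧ ∑ i, v i * x₀ i = p x₀ := by
  have p0 : p 0 = 0 := sublin_zero p hhom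
  have helper : ∀ x₀ : Fin n → ℝ, x₀ ≠ 0 →
      ∃ v : Fin n → ℝ, (∀ x, ∑ i, v i * x i ≤ p x) ∧ ∑ i, v i * x₀ i = p x₀ := by
    intro x₀ hx₀
    set f : (Fin n → ℝ) →ₗ.[ℝ] ℝ := LinearPMap.mkSpanSingleton x₀ (p x₀) hx₀ with hf
    have hfle : ∀ z : f.domain, f z ≤ p z := by
      rintro ⟨z, hz⟩
      have hz' : z ∈ Submodule.span ℝ {x₀} := hz
      obtain ⟨c, rfl⟩ := Submodule.mem_span_singleton.1 hz'
      have happ : f ⟨c • x₀, Submodule.smul_mem _ c (Submodule.mem_span_singleton_self x₀)⟩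
          = c • p x₀ := LinearPMap.mkSpanSingleton'_apply _ _ _ c _
      rw [happ]
      rcases le_or_gt 0 c with hc | hc
      · rw [hhom c hc x₀]; simp
      · have h1 : p ((-c) • x₀) = (-c) * p x₀ := hhom (-c) (by linarith) x₀
        have h2 : p 0 ≤ p (c • x₀) + p ((-c) • x₀) := by
          have := hsub (c • x₀) ((-c) • x₀)
          simpa using this
        rw [p0, h1] at h2
        simp only [smul_eq_mul]
        linarith
    obtain ⟨g, hgf, hgle⟩ := exists_extension_of_le_sublinear f p
      (fun c hc x => hhom c hc.le x) hsub hfle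
    refine ⟨fun i => g (fun j => if i = j then 1 else 0), ?_, ?_⟩
    · intro x
      have := LinearMap.pi_apply_eq_sum_univ g x
      calc ∑ i, g (fun j => if i = j then 1 else 0) * x i
          = ∑ i, x i • g (fun j => if i = j then 1 else 0) := by
            refine Finset.sum_congr rfl fun i _ => ?_
            simp [mul_comm]
        _ = g x := (LinearMap.pi_apply_eq_sum_univ g x).symm
        _ ≤ p x := hgle x
    · have h1 : g x₀ = f ⟨x₀, Submodule.mem_span_singleton_self x₀⟩ :=
        hgf ⟨x₀, Submodule.mem_span_singleton_self x₀⟩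
      have h2 : f ⟨x₀, Submodule.mem_span_singleton_self x₀⟩ = p x₀ :=
        LinearPMap.mkSpanSingleton_apply ℝ ℝ hx₀ (p x₀)
      calc ∑ i, g (fun j => if i = j then 1 else 0) * x₀ i
          = ∑ i, x₀ i • g (fun j => if i = j then 1 else 0) := by
            refine Finset.sum_congr rfl fun i _ => ?_
            simp [mul_comm]
        _ = g x₀ := (LinearMap.pi_apply_eq_sum_univ g x₀).symm
        _ = p x₀ := by rw [h1, h2]
  by_cases hx₀ : x₀ = 0
  · subst hx₀
    by_cases hn : n = 0
    · subst hn
      have pe : ∀ x : Fin 0 → ℝ, p x = 0 := fun x => by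
        rw [Subsingleton.elim x 0]; exact p0
      exact ⟨0, fun x => by simp [pe x], by simp [pe]⟩
    · have hne : (Fin n) := ⟨0, Nat.pos_of_ne_zero hn⟩
      have hsingle : (Pi.single hne (1:ℝ) : Fin n → ℝ) ≠ 0 := by
        intro h
        have := congrFun h hne
        simp at this
      obtain ⟨v, hv, _⟩ := helper (Pi.single hne 1) hsingle
      exact ⟨v, hv, by simp [p0]⟩
  · exact helper x₀ hx₀

private lemma subdiff_isCompact {n : ℕ} (p : (Fin n → ℝ) → ℝ) (hcont : Continuous p) :
    IsCompact {v : Fin n → ℝ | ∀ x, ∑ i, v i * x i ≤ p x} := by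
  refine Metric.isCompact_of_isClosed_isBounded ?_ ?_
  · have : {v : Fin n → ℝ | ∀ x, ∑ i, v i * x i ≤ p x}
        = ⋂ x : Fin n → ℝ, {v | ∑ i, v i * x i ≤ p x} := by
      ext v; simp [Set.mem_iInter]
    rw [this]
    exact isClosed_iInter fun x => isClosed_le
      (continuous_finset_sum _ fun i _ => (continuous_apply i).mul continuous_const)
      continuous_const
  · obtain ⟨z, _, hM⟩ := (isCompact_closedBall (0 : Fin n → ℝ) 1).exists_isMaxOn
      ⟨0, by simp⟩ hcont.continuousOn
    set M := p z with hMdef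
    have hball : ∀ (i : Fin n) (c : ℝ), |c| ≤ 1 →
        (Pi.single i c : Fin n → ℝ) ∈ Metric.closedBall (0 : Fin n → ℝ) 1 := by
      intro i c hc
      rw [Metric.mem_closedBall, dist_zero_right]
      refine pi_norm_le_iff_of_nonneg (by norm_num) |>.2 fun j => ?_
      rw [Pi.single_apply]
      by_cases h : j = i <;> simp [h, Real.norm_eq_abs, hc]
    have hpair : ∀ (v : Fin n → ℝ) (i : Fin n) (c : ℝ),
        ∑ j, v j * (Pi.single i c : Fin n → ℝ) j = v i * c := by
      intro v i c
      simp [Pi.single_apply, mul_ite]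
    rw [isBounded_iff_forall_norm_le]
    refine ⟨max M 0, fun v hv => ?_⟩
    refine pi_norm_le_iff_of_nonneg (le_max_right _ _) |>.2 fun i => ?_
    have h1 : v i ≤ M := by
      have := hv (Pi.single i 1)
      rw [hpair v i 1] at this
      simpa using this.trans (hM (hball i 1 (by norm_num)))
    have h2 : -v i ≤ M := by
      have := hv (Pi.single i (-1))
      rw [hpair v i (-1)] at this
      have := this.trans (hM (hball i (-1) (by norm_num)))
      linarith
    rw [Real.norm_eq_abs, abs_le]
    constructor <;> [linarith [le_max_left M 0]; exact h1.trans (le_max_left M 0)]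

private lemma minkowski_split {n : ℕ} (p₁ p₂ : (Fin n → ℝ) → ℝ)
    (hsub₁ : ∀ x y : Fin n → ℝ, p₁ (x + y) ≤ p₁ x + p₁ y)
    (hsub₂ : ∀ x y : Fin n → ℝ, p₂ (x + y) ≤ p₂ x + p₂ y)
    (hhom₁ : ∀ (c : ℝ), 0 ≤ c → ∀ x : Fin n → ℝ, p₁ (c • x) = c * p₁ x)
    (hhom₂ : ∀ (c : ℝ), 0 ≤ c → ∀ x : Fin n → ℝ, p₂ (c • x) = c * p₂ x)
    (v : Fin n → ℝ) (hv : ∀ x, ∑ i, v i * x i ≤ p₁ x + p₂ x) :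
    ∃ v₁ v₂ : Fin n → ℝ, (∀ x, ∑ i, v₁ i * x i ≤ p₁ x) ∧
      (∀ x, ∑ i, v₂ i * x i ≤ p₂ x) ∧ v = v₁ + v₂ := by
  have p₁0 : p₁ 0 = 0 := sublin_zero p₁ hhom₁
  have p₂0 : p₂ 0 = 0 := sublin_zero p₂ hhom₂
  set f : (Fin n → ℝ) → ℝ := fun x => ∑ i, v i * x i with hf
  have f_add : ∀ x y, f (x + y) = f x + f y := by
    intro x y; simp [hf, Pi.add_apply, mul_add, Finset.sum_add_distrib]
  have f_smul : ∀ (c : ℝ) (x), f (c • x) = c * f x := by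
    intro c x
    simp only [hf, Pi.smul_apply, smul_eq_mul, Finset.mul_sum]
    exact Finset.sum_congr rfl fun i _ => by ring
  set g : (Fin n → ℝ) → ℝ := fun x => f x - p₂ x with hg
  have g0 : g 0 = 0 := by simp [hg, hf, p₂0]
  have g_le : ∀ x, g x ≤ p₁ x := fun x => by
    have := hv x; simp only [hg]; linarith
  have g_super : ∀ x y, g x + g y ≤ g (x + y) := by
    intro x y
    have h := hsub₂ x y
    simp only [hg, f_add]; linarith
  have g_smul : ∀ (c : ℝ), 0 ≤ c → ∀ x, g (c • x) = c * g x := by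
    intro c hc x
    simp only [hg, f_smul, hhom₂ c hc]; ring
  have bdd : ∀ x, BddBelow (Set.range fun y => p₁ (x + y) - g y) := by
    intro x
    refine ⟨g x, ?_⟩
    rintro r ⟨y, rfl⟩
    have h1 := g_super x y
    have h2 := g_le (x + y)
    dsimp only
    linarith
  set q : (Fin n → ℝ) → ℝ := fun x => ⨅ y, (p₁ (x + y) - g y) with hq
  have hq_le : ∀ x, q x ≤ p₁ x := by
    intro x
    have := ciInf_le (bdd x) 0
    simpa [g0] using this
  have hg_le_q : ∀ x, g x ≤ q x := by
    intro x
    refine le_ciInf fun y => ?_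
    have h1 := g_super x y
    have h2 := g_le (x + y)
    linarith
  have q_neg : ∀ x, q (-x) ≤ -g x := by
    intro x
    have := ciInf_le (bdd (-x)) x
    simpa [p₁0] using this
  have q_sub : ∀ x y, q (x + y) ≤ q x + q y := by
    intro x y
    have key : ∀ y₁ y₂, q (x + y) ≤ (p₁ (x + y₁) - g y₁) + (p₁ (y + y₂) - g y₂) := by
      intro y₁ y₂
      have h0 := ciInf_le (bdd (x + y)) (y₁ + y₂)
      have h1 : p₁ (x + y + (y₁ + y₂)) ≤ p₁ (x + y₁) + p₁ (y + y₂) := by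
        have := hsub₁ (x + y₁) (y + y₂)
        have he : x + y₁ + (y + y₂) = x + y + (y₁ + y₂) := by abel
        rwa [he] at this
      have h2 := g_super y₁ y₂
      linarith
    have step1 : q (x + y) - q y ≤ q x := by
      refine le_ciInf fun y₁ => ?_
      have step2 : q (x + y) - (p₁ (x + y₁) - g y₁) ≤ q y := by
        refine le_ciInf fun y₂ => ?_
        have := key y₁ y₂
        linarith
      linarith
    linarith
  have q_hom : ∀ (c : ℝ), 0 ≤ c → ∀ x, q (c • x) = c * q x := by
    intro c hc x
    rcases eq_or_lt_of_le hc with hc0 | hc0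
    · have hq0 : q 0 = 0 := le_antisymm (by simpa [p₁0] using hq_le 0) (by simpa [g0] using hg_le_q 0)
      rw [← hc0]; simp [hq0]
    refine le_antisymm ?_ ?_
    · rw [← div_le_iff₀' hc0]
      refine le_ciInf fun y => ?_
      rw [div_le_iff₀' hc0]
      have h0 := ciInf_le (bdd (c • x)) (c • y)
      have he : c • x + c • y = c • (x + y) := (smul_add c x y).symm
      rw [he, hhom₁ c hc, g_smul c hc] at h0
      calc q (c • x) ≤ c * p₁ (x + y) - c * g y := h0
        _ = c * (p₁ (x + y) - g y) := by ring
    · refine le_ciInf fun y => ?_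
      have hy : y = c • (c⁻¹ • y) := by
        rw [smul_smul, mul_inv_cancel₀ (ne_of_gt hc0), one_smul]
      have he : c • x + y = c • (x + c⁻¹ • y) := by
        rw [smul_add, ← hy]
      rw [he, hhom₁ c hc]
      have hgy : g y = c * g (c⁻¹ • y) := by rw [← g_smul c hc, ← hy]
      rw [hgy]
      have h0 := ciInf_le (bdd x) (c⁻¹ • y)
      calc c * q x ≤ c * (p₁ (x + c⁻¹ • y) - g (c⁻¹ • y)) :=
            mul_le_mul_of_nonneg_left h0 hc
        _ = c * p₁ (x + c⁻¹ • y) - c * g (c⁻¹ • y) := by ring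
  obtain ⟨v₁, hv₁, -⟩ := exists_subgrad q q_sub q_hom 0
  refine ⟨v₁, v - v₁, fun x => (hv₁ x).trans (hq_le x), ?_, by abel⟩
  intro x
  have h1 : ∑ i, v₁ i * (-x) i ≤ q (-x) := hv₁ (-x)
  have h2 : ∑ i, v₁ i * (-x) i = -∑ i, v₁ i * x i := by
    rw [← Finset.sum_neg_distrib]
    exact Finset.sum_congr rfl fun i _ => by simp
  have h3 := q_neg x
  have hgx : g x = f x - p₂ x := rfl
  have hsum : ∑ i, (v - v₁) i * x i = f x - ∑ i, v₁ i * x i := by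
    simp only [hf, Pi.sub_apply, sub_mul, Finset.sum_sub_distrib]
  rw [hsum]
  have : g x ≤ ∑ i, v₁ i * x i := by
    rw [h2] at h1
    linarith
  linarith

private lemma subdiff_convex {n : ℕ} (p : (Fin n → ℝ) → ℝ) :
    Convex ℝ {v : Fin n → ℝ | ∀ x, ∑ i, v i * x i ≤ p x} := by
  intro v hv w hw a b ha hb hab
  intro x
  have hsum : ∑ i, (a • v + b • w) i * x i
      = a * ∑ i, v i * x i + b * ∑ i, w i * x i := by
    simp only [Pi.add_apply, Pi.smul_apply, smul_eq_mul, add_mul, Finset.sum_add_distrib,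
      Finset.mul_sum]
    congr 1 <;> exact Finset.sum_congr rfl fun i _ => by ring
  rw [hsum]
  calc a * ∑ i, v i * x i + b * ∑ i, w i * x i
      ≤ a * p x + b * p x :=
        add_le_add (mul_le_mul_of_nonneg_left (hv x) ha) (mul_le_mul_of_nonneg_left (hw x) hb)
    _ = p x := by rw [← add_mul, hab, one_mul]

private lemma isCompact_hull_union {n : ℕ} {S₁ S₂ : Set (Fin n → ℝ)}
    (h₁c : IsCompact S₁) (h₂c : IsCompact S₂) (h₁conv : Convex ℝ S₁) (h₂conv : Convex ℝ S₂)
    (h₁ne : S₁.Nonempty) (h₂ne : S₂.Nonempty) :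
    IsCompact (convexHull ℝ (S₁ ∪ S₂)) := by
  rw [Convex.convexHull_union h₁conv h₂conv h₁ne h₂ne]
  have hJ : convexJoin ℝ S₁ S₂ =
      (fun pr : ℝ × ((Fin n → ℝ) × (Fin n → ℝ)) => pr.1 • pr.2.1 + (1 - pr.1) • pr.2.2) ''
        (Set.Icc (0:ℝ) 1 ×ˢ S₁ ×ˢ S₂) := by
    ext z
    rw [mem_convexJoin]
    constructor
    · rintro ⟨a, ha, b, hb, hz⟩
      obtain ⟨u, w, hu, hw, huw, rfl⟩ := hz
      refine ⟨(u, a, b), ⟨⟨hu, by linarith⟩, ha, hb⟩, ?_⟩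
      simp only
      rw [show (1 : ℝ) - u = w by linarith]
    · rintro ⟨⟨t, a, b⟩, ⟨⟨ht0, ht1⟩, ha, hb⟩, rfl⟩
      exact ⟨a, ha, b, hb, t, 1 - t, ht0, by linarith, by ring, rfl⟩
  rw [hJ]
  refine (isCompact_Icc.prod (h₁c.prod h₂c)).image ?_
  exact (continuous_fst.smul (continuous_fst.comp continuous_snd)).add
    ((continuous_const.sub continuous_fst).smul (continuous_snd.comp continuous_snd))

/-- The map `p ↦ ∂p` from sublinear functions to nonempty convex compact subsets is a
semiring homomorphism (max ↦ convex hull of union, + ↦ Minkowski sum) and is injective. -/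
theorem subdifferential_hom {n : ℕ} (p₁ p₂ : (Fin n → ℝ) → ℝ)
    (hcont₁ : Continuous p₁) (hcont₂ : Continuous p₂)
    (hsub₁ : ∀ x y : Fin n → ℝ, p₁ (x + y) ≤ p₁ x + p₁ y)
    (hsub₂ : ∀ x y : Fin n → ℝ, p₂ (x + y) ≤ p₂ x + p₂ y)
    (hhom₁ : ∀ (c : ℝ), 0 ≤ c → ∀ x : Fin n → ℝ, p₁ (c • x) = c * p₁ x)
    (hhom₂ : ∀ (c : ℝ), 0 ≤ c → ∀ x : Fin n → ℝ, p₂ (c • x) = c * p₂ x) :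
    {v : Fin n → ℝ | ∀ x, ∑ i, v i * x i ≤ max (p₁ x) (p₂ x)} =
      convexHull ℝ ({v : Fin n → ℝ | ∀ x, ∑ i, v i * x i ≤ p₁ x} ∪
        {v : Fin n → ℝ | ∀ x, ∑ i, v i * x i ≤ p₂ x}) ∧
    {v : Fin n → ℝ | ∀ x, ∑ i, v i * x i ≤ p₁ x + p₂ x} =
      {v : Fin n → ℝ | ∀ x, ∑ i, v i * x i ≤ p₁ x} +
        {v : Fin n → ℝ | ∀ x, ∑ i, v i * x i ≤ p₂ x} ∧
    ({v : Fin n → ℝ | ∀ x, ∑ i, v i * x i ≤ p₁ x} =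
        {v : Fin n → ℝ | ∀ x, ∑ i, v i * x i ≤ p₂ x} → p₁ = p₂) := by
  refine ⟨?_, ?_, ?_⟩
  · -- max ↦ convex hull of union
    apply Set.Subset.antisymm
    · intro v hv
      by_contra hvC
      obtain ⟨v₁₀, hv₁₀, -⟩ := exists_subgrad p₁ hsub₁ hhom₁ 0
      obtain ⟨v₂₀, hv₂₀, -⟩ := exists_subgrad p₂ hsub₂ hhom₂ 0
      have hCc : IsCompact (convexHull ℝ ({v : Fin n → ℝ | ∀ x, ∑ i, v i * x i ≤ p₁ x} ∪
          {v : Fin n → ℝ | ∀ x, ∑ i, v i * x i ≤ p₂ x})) :=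
        isCompact_hull_union (subdiff_isCompact p₁ hcont₁) (subdiff_isCompact p₂ hcont₂)
          (subdiff_convex p₁) (subdiff_convex p₂) ⟨v₁₀, hv₁₀⟩ ⟨v₂₀, hv₂₀⟩
      obtain ⟨f, u, hfu, huv⟩ := geometric_hahn_banach_closed_point
        (convex_convexHull ℝ _) hCc.isClosed hvC
      set w : Fin n → ℝ := fun i => f (fun j => if i = j then 1 else 0) with hw
      have hfeq : ∀ a : Fin n → ℝ, f a = ∑ i, a i * w i := by
        intro a
        have := LinearMap.pi_apply_eq_sum_univ (f : (Fin n → ℝ) →ₗ[ℝ] ℝ) a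
        rw [show (f : (Fin n → ℝ) →ₗ[ℝ] ℝ) a = f a from rfl] at this
        rw [this]
        exact Finset.sum_congr rfl fun i _ => by rw [smul_eq_mul]; rfl
      obtain ⟨u₁, hu₁S, hu₁w⟩ := exists_subgrad p₁ hsub₁ hhom₁ w
      obtain ⟨u₂, hu₂S, hu₂w⟩ := exists_subgrad p₂ hsub₂ hhom₂ w
      have h1 : p₁ w < u := by
        have := hfu u₁ (subset_convexHull ℝ _ (Or.inl hu₁S))
        rwa [hfeq u₁, hu₁w] at this
      have h2 : p₂ w < u := by
        have := hfu u₂ (subset_convexHull ℝ _ (Or.inr hu₂S))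
        rwa [hfeq u₂, hu₂w] at this
      have h3 : u < ∑ i, v i * w i := by rwa [hfeq v] at huv
      have h4 := hv w
      have h5 : max (p₁ w) (p₂ w) < u := max_lt h1 h2
      linarith
    · refine convexHull_min (Set.union_subset ?_ ?_) (subdiff_convex _)
      · exact fun v hv x => (hv x).trans (le_max_left _ _)
      · exact fun v hv x => (hv x).trans (le_max_right _ _)
  · -- sum ↦ Minkowski sum
    apply Set.Subset.antisymm
    · intro v hv
      obtain ⟨v₁, v₂, hv₁, hv₂, hv12⟩ :=
        minkowski_split p₁ p₂ hsub₁ hsub₂ hhom₁ hhom₂ v hv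
      exact Set.mem_add.2 ⟨v₁, hv₁, v₂, hv₂, hv12.symm⟩
    · rintro v ⟨v₁, hv₁, v₂, hv₂, rfl⟩
      intro x
      have hsum : ∑ i, (v₁ + v₂) i * x i = (∑ i, v₁ i * x i) + ∑ i, v₂ i * x i := by
        simp [Pi.add_apply, add_mul, Finset.sum_add_distrib]
      rw [hsum]
      exact add_le_add (hv₁ x) (hv₂ x)
  · intro hS
    funext x
    obtain ⟨v, hv, hvx⟩ := exists_subgrad p₁ hsub₁ hhom₁ x
    obtain ⟨w, hw, hwx⟩ := exists_subgrad p₂ hsub₂ hhom₂ x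
    have hv' : ∀ y, ∑ i, v i * y i ≤ p₂ y := (Set.ext_iff.1 hS v).1 hv
    have hw' : ∀ y, ∑ i, w i * y i ≤ p₁ y := (Set.ext_iff.1 hS w).2 hw
    exact le_antisymm (hvx ▸ hv' x) (hwx ▸ hw' x)
end

section
/- In dimension 1, for a polynomial f(x) = Σ_{k=0}^{n} a_k x^k with a_n ≠ 0 and a_0 ≠ 0, the dequantization f̂(x) = lim_{h→0⁺} h·log|f(exp(x/h))| equals max(0, n·x) for all x ≠ 0, and its subdifferential at the origin is the segment [0, n] ⊂ ℝ. -/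
open Filter Topology

/-- In dimension one, for `f(x) = ∑_{k=0}^n a_k x^k` with `a_n ≠ 0` and `a_0 ≠ 0`, the
dequantization `f̂(x)` equals `max 0 (n·x)` for all `x ≠ 0`, and the subdifferential
of `x ↦ max 0 (n·x)` at the origin is the segment `[0, n]`. -/
theorem dequantization_dim_one (n : ℕ) (a : ℕ → ℝ) (han : a n ≠ 0) (ha0 : a 0 ≠ 0) :
    (∀ x : ℝ, x ≠ 0 →
      Filter.Tendsto
        (fun h : ℝ => h * Real.log |∑ k ∈ Finset.range (n + 1), a k * Real.exp (x / h) ^ k|)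
        (nhdsWithin 0 (Set.Ioi 0)) (nhds (max 0 (n * x)))) ∧
    {v : ℝ | ∀ x : ℝ, v * x ≤ max 0 (n * x)} = Set.Icc (0 : ℝ) n := by
  constructor
  · intro x hx
    set m : ℝ := if 0 < x then (n : ℝ) else 0 with hm
    set L : ℝ := if 0 < x then a n else a 0 with hLdef
    have hL : L ≠ 0 := by
      rw [hLdef]; split <;> assumption
    have hmx : m * x = max 0 ((n : ℝ) * x) := by
      rcases lt_or_gt_of_ne hx with h | h
      · have h1 : (n : ℝ) * x ≤ 0 :=
          mul_nonpos_iff.2 (Or.inl ⟨Nat.cast_nonneg n, h.le⟩)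
        simp [hm, not_lt.2 h.le, max_eq_left h1]
      · have h1 : (0 : ℝ) ≤ (n : ℝ) * x :=
          mul_nonneg (Nat.cast_nonneg n) h.le
        simp [hm, h, max_eq_right h1]
    set T : ℝ → ℝ := fun h => ∑ k ∈ Finset.range (n + 1),
      a k * Real.exp (((k : ℝ) - m) * x / h) with hTdef
    have key : ∀ k ∈ Finset.range (n + 1),
        Tendsto (fun h : ℝ => a k * Real.exp (((k : ℝ) - m) * x / h))
          (nhdsWithin 0 (Set.Ioi 0)) (nhds (if (k : ℝ) = m then a k else 0)) := by
      intro k hk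
      rcases eq_or_ne ((k : ℝ)) m with he | he
      · simp [he]
      · rw [if_neg he]
        have hneg : ((k : ℝ) - m) * x < 0 := by
          rcases lt_or_gt_of_ne hx with h | h
          · have hm0 : m = 0 := by rw [hm, if_neg (not_lt.2 h.le)]
            have hk0 : (0 : ℝ) < (k : ℝ) := by
              have hne : k ≠ 0 := by rintro rfl; exact he (by simp [hm0])
              exact_mod_cast Nat.pos_of_ne_zero hne
            rw [hm0, sub_zero]; exact mul_neg_of_pos_of_neg hk0 h
          · have hmn : m = (n : ℝ) := by rw [hm, if_pos h]
            have hkn : (k : ℝ) < n := by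
              have h1 : k ≤ n := Nat.lt_succ_iff.mp (Finset.mem_range.mp hk)
              have hne : k ≠ n := by rintro rfl; exact he hmn.symm
              exact_mod_cast lt_of_le_of_ne h1 hne
            rw [hmn]; exact mul_neg_of_neg_of_pos (by linarith) h
        have h1 : Tendsto (fun h : ℝ => ((k : ℝ) - m) * x / h)
            (nhdsWithin (0:ℝ) (Set.Ioi 0)) atBot := by
          have h2 : Tendsto (fun h : ℝ => h⁻¹) (nhdsWithin (0:ℝ) (Set.Ioi 0)) atTop :=
            tendsto_inv_nhdsGT_zero
          simpa [div_eq_mul_inv] using h2.const_mul_atTop_of_neg hneg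
        have h3 := Real.tendsto_exp_atBot.comp h1
        simpa using h3.const_mul (a k)
    have hT : Tendsto T (nhdsWithin 0 (Set.Ioi 0)) (nhds L) := by
      have hsum := tendsto_finset_sum _ key
      have hLs : ∑ k ∈ Finset.range (n + 1), (if (k : ℝ) = m then a k else 0) = L := by
        rw [hLdef, hm]
        rcases lt_or_gt_of_ne hx with h | h
        · rw [if_neg (not_lt.2 h.le), if_neg (not_lt.2 h.le)]
          rw [Finset.sum_eq_single_of_mem 0 (by simp)]
          · simp
          · intro k _ hk; rw [if_neg (by exact_mod_cast hk)]
        · rw [if_pos h, if_pos h]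
          rw [Finset.sum_eq_single_of_mem n (by simp)]
          · simp
          · intro k _ hk; rw [if_neg (by exact_mod_cast hk)]
      rw [hLs] at hsum
      exact hsum
    have hTne : ∀ᶠ h in nhdsWithin (0:ℝ) (Set.Ioi 0), T h ≠ 0 := hT.eventually_ne hL
    have hlim : Tendsto (fun h : ℝ => m * x + h * Real.log |T h|)
        (nhdsWithin 0 (Set.Ioi 0)) (nhds (m * x)) := by
      have h1 : Tendsto (fun h : ℝ => h) (nhdsWithin (0:ℝ) (Set.Ioi 0)) (nhds 0) :=
        tendsto_id.mono_left nhdsWithin_le_nhds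
      have h2 : Tendsto (fun h : ℝ => Real.log |T h|)
          (nhdsWithin 0 (Set.Ioi 0)) (nhds (Real.log |L|)) :=
        (Real.continuousAt_log (by simpa using hL)).tendsto.comp hT.abs
      have h3 := (tendsto_const_nhds (x := m * x)
        (f := nhdsWithin (0:ℝ) (Set.Ioi 0))).add (h1.mul h2)
      simpa using h3
    rw [← hmx]
    refine Tendsto.congr' ?_ hlim
    filter_upwards [hTne, self_mem_nhdsWithin] with h hT0 hh
    have hh0 : (0:ℝ) < h := hh
    have hS : ∑ k ∈ Finset.range (n + 1), a k * Real.exp (x / h) ^ k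
        = Real.exp (m * x / h) * T h := by
      rw [hTdef, Finset.mul_sum]
      refine Finset.sum_congr rfl fun k hk => ?_
      rw [← Real.exp_nat_mul]
      have harg : (k : ℝ) * (x / h) = m * x / h + ((k : ℝ) - m) * x / h := by
        field_simp; ring
      rw [harg, Real.exp_add]; ring
    rw [hS, abs_mul, abs_of_pos (Real.exp_pos _),
      Real.log_mul (Real.exp_ne_zero _) (abs_ne_zero.2 hT0), Real.log_exp,
      mul_add, mul_div_cancel₀ _ (ne_of_gt hh0)]
  · ext v
    simp only [Set.mem_setOf_eq, Set.mem_Icc]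
    constructor
    · intro hv
      constructor
      · have h1 := hv (-1)
        have h2 : max 0 ((n:ℝ) * (-1)) = 0 :=
          max_eq_left (by simp)
        rw [h2] at h1
        nlinarith
      · have h1 := hv 1
        have h2 : max 0 ((n:ℝ) * 1) = (n:ℝ) := by
          rw [mul_one]; exact max_eq_right (Nat.cast_nonneg n)
        rw [h2, mul_one] at h1
        exact h1
    · rintro ⟨h0, hn⟩ x
      rcases le_or_gt x 0 with hx | hx
      · exact le_trans (mul_nonpos_iff.2 (Or.inl ⟨h0, hx⟩)) (le_max_left _ _)
      · exact le_trans (mul_le_mul_of_nonneg_right hn hx.le) (le_max_right _ _)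
end
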